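/- For any algebra 𝔸 and congruences θ_0, θ_1, θ_2, the hypercommutator satisfies [θ_0, [θ_1,θ_2]_H]_H ≤ [θ_0,θ_1,θ_2]_H. -/
import Mathlib


set_option linter.unusedSectionVars false
set_option linter.unusedVariables false

universe u v

structure Signature : Type 1 where
  ops : Type
  arity : ops → ℕ

class Alg (σ : Signature) (A : Type u) : Type u where
  interp : ∀ o : σ.ops, (Fin (σ.arity o) → A) → A

/-- A labeled `S`-dimensional cube with vertices labeled by elements of `A`. -/
abbrev Cube (S : Type v) (A : Type u) : Type (max u v) := (S → Bool) → A

section Defs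

variable {A : Type u} {B : Type u} {S : Type v}

def Quasireflexive (R : Set (B × B)) : Prop :=
  ∀ a b : B, (a, b) ∈ R → (a, a) ∈ R ∧ (b, b) ∈ R

def SymmRel (R : Set (B × B)) : Prop := ∀ a b : B, (a, b) ∈ R → (b, a) ∈ R

def TransRel (R : Set (B × B)) : Prop :=
  ∀ a b c : B, (a, b) ∈ R → (b, c) ∈ R → (a, c) ∈ R

def face [DecidableEq S] (i : S) (b : Bool) (γ : Cube S A) : Cube {x : S // x ≠ i} A :=
  fun f => γ fun j => if h : j = i then b else f ⟨j, h⟩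

def facesRel [DecidableEq S] (i : S) (R : Set (Cube S A)) :
    Set (Cube {x : S // x ≠ i} A × Cube {x : S // x ≠ i} A) :=
  {p | ∃ γ ∈ R, p = (face i false γ, face i true γ)}

def SRefl [DecidableEq S] (R : Set (Cube S A)) : Prop := ∀ i : S, Quasireflexive (facesRel i R)
def SSymm [DecidableEq S] (R : Set (Cube S A)) : Prop := ∀ i : S, SymmRel (facesRel i R)
def STrans [DecidableEq S] (R : Set (Cube S A)) : Prop := ∀ i : S, TransRel (facesRel i R)

def glue (i : S) (a b : Cube {x : S // x ≠ i} A) : Cube S A :=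
  fun f => if f i then b (fun j => f j.val) else a (fun j => f j.val)

def reflMap [DecidableEq S] (i : S) (b : Bool) (γ : Cube S A) : Cube S A :=
  glue i (face i b γ) (face i b γ)

def symMap [DecidableEq S] (i : S) (γ : Cube S A) : Cube S A :=
  glue i (face i true γ) (face i false γ)

def cut (Q : Set S) [DecidablePred (· ∈ Q)] (γ : Cube S A) :
    Cube {x : S // x ∈ Q} (Cube {x : S // x ∉ Q} A) :=
  fun f g => γ fun j => if h : j ∈ Q then f ⟨j, h⟩ else g ⟨j, h⟩

def cutProj (Q : Set S) [DecidablePred (· ∈ Q)] (R : Set (Cube S A))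
    (f : {x : S // x ∈ Q} → Bool) : Set (Cube {x : S // x ∉ Q} A) :=
  (fun γ => cut Q γ f) '' R

variable (σ : Signature)

def CompatCube [Alg σ A] (R : Set (Cube S A)) : Prop :=
  ∀ (o : σ.ops) (γ : Fin (σ.arity o) → Cube S A), (∀ k, γ k ∈ R) →
    (fun f => Alg.interp (A := A) o fun k => γ k f) ∈ R

def CompatRel [Alg σ A] (θ : Set (A × A)) : Prop :=
  ∀ (o : σ.ops) (x y : Fin (σ.arity o) → A), (∀ k, (x k, y k) ∈ θ) →
    (Alg.interp (A := A) o x, Alg.interp (A := A) o y) ∈ θ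

def IsCongruence [Alg σ A] (θ : Set (A × A)) : Prop :=
  (∀ a : A, (a, a) ∈ θ) ∧ SymmRel θ ∧ TransRel θ ∧ CompatRel σ θ

def IsTolerance [Alg σ A] [DecidableEq S] (R : Set (Cube S A)) : Prop :=
  CompatCube σ R ∧ SRefl R ∧ SSymm R

def IsHCongruence [Alg σ A] [DecidableEq S] (R : Set (Cube S A)) : Prop :=
  IsTolerance σ R ∧ STrans R

def subalgGen [Alg σ A] (X : Set (Cube S A)) : Set (Cube S A) :=
  ⋂₀ {R : Set (Cube S A) | CompatCube σ R ∧ X ⊆ R}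

def tolGen [Alg σ A] [DecidableEq S] (X : Set (Cube S A)) : Set (Cube S A) :=
  ⋂₀ {R : Set (Cube S A) | IsTolerance σ R ∧ X ⊆ R}

def congGen [Alg σ A] [DecidableEq S] (X : Set (Cube S A)) : Set (Cube S A) :=
  ⋂₀ {R : Set (Cube S A) | IsHCongruence σ R ∧ X ⊆ R}

def cubeAt (i : S) (p : A × A) : Cube S A := fun f => bif f i then p.2 else p.1

def cubeSet (i : S) (θ : Set (A × A)) : Set (Cube S A) := cubeAt i '' θ

def MRel [Alg σ A] [DecidableEq S] (θ : S → Set (A × A)) : Set (Cube S A) :=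
  tolGen σ (⋃ i : S, cubeSet i (θ i))

def DeltaRel [Alg σ A] [DecidableEq S] (θ : S → Set (A × A)) : Set (Cube S A) :=
  congGen σ (⋃ i : S, cubeSet i (θ i))

def rectRel [DecidableEq S] (θ : S → Set (A × A)) : Set (Cube S A) :=
  {γ | ∀ (i : S) (f : {x : S // x ≠ i} → Bool), (face i false γ f, face i true γ f) ∈ θ i}

def dirClosure [DecidableEq S] (i : S) (R : Set (Cube S A)) : Set (Cube S A) :=
  {γ | Relation.TransGen (fun a b : Cube {x : S // x ≠ i} A => (a, b) ∈ facesRel i R)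
      (face i false γ) (face i true γ)}

def Centrality [DecidableEq S] [Fintype S] (δ : Set (A × A)) (i : S)
    (R : Set (Cube S A)) : Prop :=
  ¬ ∃ γ ∈ R, Nat.card {f : {x : S // x ≠ i} → Bool //
      (face i false γ f, face i true γ f) ∈ δ} = 2 ^ (Fintype.card S - 1) - 1

end Defs

def finMod (n : ℕ) [NeZero n] (j : ℕ) : Fin n :=
  ⟨j % n, Nat.mod_lt _ (Nat.pos_of_ne_zero (NeZero.ne n))⟩

def tcSeq {A : Type u} {n : ℕ} [NeZero n] (Y : Set (Cube (Fin n) A)) :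
    ℕ → Set (Cube (Fin n) A)
  | 0 => dirClosure (finMod n 0) Y
  | j + 1 => dirClosure (finMod n (j + 1)) (tcSeq Y j)

def tcClosure {A : Type u} {n : ℕ} [NeZero n] (Y : Set (Cube (Fin n) A)) :
    Set (Cube (Fin n) A) := ⋃ j : ℕ, tcSeq Y j

def lastIdx (n : ℕ) [NeZero n] : Fin n :=
  ⟨n - 1, Nat.sub_lt (Nat.pos_of_ne_zero (NeZero.ne n)) Nat.one_pos⟩

def tcComm (σ : Signature) {A : Type u} [Alg σ A] (n : ℕ) [NeZero n]
    (θ : Fin n → Set (A × A)) : Set (A × A) :=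
  ⋂₀ {δ : Set (A × A) | IsCongruence σ δ ∧ Centrality δ (lastIdx n) (MRel σ θ)}

def hComm (σ : Signature) {A : Type u} [Alg σ A] (n : ℕ) [NeZero n]
    (θ : Fin n → Set (A × A)) : Set (A × A) :=
  ⋂₀ {δ : Set (A × A) | IsCongruence σ δ ∧ Centrality δ (lastIdx n) (DeltaRel σ θ)}

inductive Term (σ : Signature) (k : ℕ) : Type
  | var : Fin k → Term σ k
  | app : (o : σ.ops) → (Fin (σ.arity o) → Term σ k) → Term σ k

def Term.eval {σ : Signature} {k : ℕ} {A : Type u} [Alg σ A] :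
    Term σ k → (Fin k → A) → A
  | .var i, v => v i
  | .app o ts, v => Alg.interp (A := A) o fun j => (ts j).eval v

def IsTaylorAlg (σ : Signature) (A : Type u) [Alg σ A] : Prop :=
  ∃ (m : ℕ) (t : Term σ (m + 1)),
    (∀ a : A, t.eval (fun _ => a) = a) ∧
    ∀ e : Fin (m + 1), ∃ u v : Fin (m + 1) → Bool, u e = false ∧ v e = true ∧
      ∀ x y : A, t.eval (fun i => bif u i then y else x)
               = t.eval (fun i => bif v i then y else x)

open Classical in
noncomputable def comCube {A : Type u} (n : ℕ) (x y : A) : Cube (Fin n) A :=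
  fun f => if ∀ i, f i = true then y else x

def iSupported {A : Type u} {S : Type v} [DecidableEq S] (i : S) (γ : Cube S A)
    (x y : A) : Prop :=
  face i false γ (fun _ => true) = x ∧ face i true γ (fun _ => true) = y ∧
  ∀ f : {z : S // z ≠ i} → Bool, f ≠ (fun _ => true) →
    face i false γ f = face i true γ f

def sqCube {A : Type u} (a b c d : A) : Cube (Fin 2) A :=
  fun f => if f 0 then (if f 1 then d else c) else (if f 1 then b else a)

def lcs (σ : Signature) {A : Type u} [Alg σ A] (θ : Set (A × A)) : ℕ → Set (A × A)
  | 0 => θ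
  | n + 1 => tcComm σ 2 ![θ, lcs σ θ n]

def diagRel (A : Type u) : Set (A × A) := {p : A × A | p.1 = p.2}

/-! ### Auxiliary lemmas for stmt16 -/

section AuxBasic

variable {A : Type u} {S : Type v} [DecidableEq S]

theorem glue_apply {i : S} (a b : Cube {x : S // x ≠ i} A) (f : S → Bool) :
    glue i a b f = if f i then b (fun j => f j.val) else a (fun j => f j.val) := rfl

theorem fin2cases : ∀ j : Fin 2, j = 0 ∨ j = 1 := by decide

theorem fin3cases : ∀ j : Fin 3, j = 0 ∨ j = 1 ∨ j = 2 := by decide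

theorem restrict_reconstruct (i : S) (c : Bool) (h : {x : S // x ≠ i} → Bool) :
    (fun j : {x : S // x ≠ i} => if hj : (j : S) = i then c else h ⟨j, hj⟩) = h := by
  funext j
  rw [dif_neg j.2]

theorem face_glue (i : S) (a b : Cube {x : S // x ≠ i} A) (c : Bool) :
    face i c (glue i a b) = if c then b else a := by
  funext h
  simp only [face, glue]
  rw [dif_pos trivial, restrict_reconstruct]
  cases c <;> simp

theorem face_glue_false (i : S) (a b : Cube {x : S // x ≠ i} A) :
    face i false (glue i a b) = a := by
  rw [face_glue]; simp

theorem face_glue_true (i : S) (a b : Cube {x : S // x ≠ i} A) :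
    face i true (glue i a b) = b := by
  rw [face_glue]; simp

theorem eq_glue (i : S) (γ : Cube S A) :
    γ = glue i (face i false γ) (face i true γ) := by
  funext f
  simp only [glue, face]
  by_cases hf : f i = true
  · rw [if_pos hf]
    congr 1
    funext j
    by_cases hj : j = i
    · rw [dif_pos hj, hj]; exact hf
    · rw [dif_neg hj]
  · rw [if_neg hf]
    congr 1
    funext j
    by_cases hj : j = i
    · rw [dif_pos hj, hj]
      exact (Bool.not_eq_true (f i)).mp hf
    · rw [dif_neg hj]

end AuxBasic
section AuxHC

variable {A : Type u} {S : Type v} [DecidableEq S] {σ : Signature} [Alg σ A]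

theorem symMap_apply (i : S) (γ : Cube S A) (f : S → Bool) :
    symMap i γ f = γ (fun j => if j = i then !(f i) else f j) := by
  simp only [symMap, glue, face]
  by_cases hf : f i = true
  · rw [if_pos hf]
    congr 1
    funext j
    by_cases hj : j = i
    · rw [dif_pos hj, if_pos hj, hf]; rfl
    · rw [dif_neg hj, if_neg hj]
  · rw [if_neg hf]
    congr 1
    funext j
    by_cases hj : j = i
    · rw [dif_pos hj, if_pos hj, (Bool.not_eq_true (f i)).mp hf]; rfl
    · rw [dif_neg hj, if_neg hj]

theorem reflMap_apply (i : S) (c : Bool) (γ : Cube S A) (f : S → Bool) :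
    reflMap i c γ f = γ (fun j => if j = i then c else f j) := by
  simp only [reflMap, glue, face]
  rw [ite_self]
  congr 1

theorem mem_facesRel (i : S) {R : Set (Cube S A)} {γ : Cube S A} (hγ : γ ∈ R) :
    (face i false γ, face i true γ) ∈ facesRel i R := ⟨γ, hγ, rfl⟩

theorem IsHCongruence.mem_symMap {R : Set (Cube S A)} (hR : IsHCongruence σ R)
    {γ : Cube S A} (hγ : γ ∈ R) (i : S) : symMap i γ ∈ R := by
  obtain ⟨γ', hγ', heq⟩ := hR.1.2.2 i _ _ (mem_facesRel i hγ)
  have e1 : face i false γ' = face i true γ := (Prod.mk.injEq _ _ _ _ ▸ heq).1.symm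
  have e2 : face i true γ' = face i false γ := (Prod.mk.injEq _ _ _ _ ▸ heq).2.symm
  have : γ' = symMap i γ := by
    rw [eq_glue i γ', e1, e2]; rfl
  exact this ▸ hγ'

theorem IsHCongruence.mem_glue_refl {R : Set (Cube S A)} (hR : IsHCongruence σ R)
    {γ : Cube S A} (hγ : γ ∈ R) (i : S) (c : Bool) :
    glue i (face i c γ) (face i c γ) ∈ R := by
  have h := hR.1.2.1 i _ _ (mem_facesRel i hγ)
  cases c
  · obtain ⟨γ', hγ', heq⟩ := h.1
    have e1 : face i false γ' = face i false γ := (Prod.mk.injEq _ _ _ _ ▸ heq).1.symm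
    have e2 : face i true γ' = face i false γ := (Prod.mk.injEq _ _ _ _ ▸ heq).2.symm
    have : γ' = glue i (face i false γ) (face i false γ) := by
      rw [eq_glue i γ', e1, e2]
    exact this ▸ hγ'
  · obtain ⟨γ', hγ', heq⟩ := h.2
    have e1 : face i false γ' = face i true γ := (Prod.mk.injEq _ _ _ _ ▸ heq).1.symm
    have e2 : face i true γ' = face i true γ := (Prod.mk.injEq _ _ _ _ ▸ heq).2.symm
    have : γ' = glue i (face i true γ) (face i true γ) := by
      rw [eq_glue i γ', e1, e2]
    exact this ▸ hγ'

theorem IsHCongruence.mem_glue_trans {R : Set (Cube S A)} (hR : IsHCongruence σ R)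
    {γ γ' : Cube S A} (hγ : γ ∈ R) (hγ' : γ' ∈ R) (i : S)
    (hmatch : face i true γ = face i false γ') :
    glue i (face i false γ) (face i true γ') ∈ R := by
  have h2 : (face i false γ', face i true γ') ∈ facesRel i R := mem_facesRel i hγ'
  rw [← hmatch] at h2
  obtain ⟨γ'', hγ'', heq⟩ := hR.2 i _ _ _ (mem_facesRel i hγ) h2
  have e1 : face i false γ'' = face i false γ := (Prod.mk.injEq _ _ _ _ ▸ heq).1.symm
  have e2 : face i true γ'' = face i true γ' := (Prod.mk.injEq _ _ _ _ ▸ heq).2.symm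
  have : γ'' = glue i (face i false γ) (face i true γ') := by
    rw [eq_glue i γ'', e1, e2]
  exact this ▸ hγ''

theorem isHCong_sInter {F : Set (Set (Cube S A))}
    (hF : ∀ R ∈ F, IsHCongruence σ R) : IsHCongruence σ (⋂₀ F) := by
  refine ⟨⟨?_, ?_, ?_⟩, ?_⟩
  · intro o γ hγk
    intro R hRF
    exact (hF R hRF).1.1 o γ (fun k => hγk k R hRF)
  · intro i a b hab
    obtain ⟨γ, hγ, heq⟩ := hab
    have ha : a = face i false γ := (Prod.mk.injEq _ _ _ _ ▸ heq).1
    have hb : b = face i true γ := (Prod.mk.injEq _ _ _ _ ▸ heq).2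
    constructor
    · refine ⟨glue i (face i false γ) (face i false γ), ?_, ?_⟩
      · intro R hRF; exact (hF R hRF).mem_glue_refl (hγ R hRF) i false
      · rw [face_glue_false, face_glue_true, ha]
    · refine ⟨glue i (face i true γ) (face i true γ), ?_, ?_⟩
      · intro R hRF; exact (hF R hRF).mem_glue_refl (hγ R hRF) i true
      · rw [face_glue_false, face_glue_true, hb]
  · intro i a b hab
    obtain ⟨γ, hγ, heq⟩ := hab
    have ha : a = face i false γ := (Prod.mk.injEq _ _ _ _ ▸ heq).1
    have hb : b = face i true γ := (Prod.mk.injEq _ _ _ _ ▸ heq).2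
    refine ⟨symMap i γ, ?_, ?_⟩
    · intro R hRF; exact (hF R hRF).mem_symMap (hγ R hRF) i
    · show (b, a) = _
      rw [ha, hb, symMap, face_glue_false, face_glue_true]
  · intro i a b c hab hbc
    obtain ⟨γ, hγ, heq⟩ := hab
    obtain ⟨γ', hγ', heq'⟩ := hbc
    have ha : a = face i false γ := (Prod.mk.injEq _ _ _ _ ▸ heq).1
    have hb : b = face i true γ := (Prod.mk.injEq _ _ _ _ ▸ heq).2
    have hb' : b = face i false γ' := (Prod.mk.injEq _ _ _ _ ▸ heq').1
    have hc : c = face i true γ' := (Prod.mk.injEq _ _ _ _ ▸ heq').2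
    have hmatch : face i true γ = face i false γ' := by rw [← hb, hb']
    refine ⟨glue i (face i false γ) (face i true γ'), ?_, ?_⟩
    · intro R hRF; exact (hF R hRF).mem_glue_trans (hγ R hRF) (hγ' R hRF) i hmatch
    · rw [face_glue_false, face_glue_true, ha, hc]

theorem deltaRel_isHCong {n : ℕ} (θ : Fin n → Set (A × A)) :
    IsHCongruence σ (DeltaRel σ θ) :=
  isHCong_sInter (fun _ hR => hR.1)

theorem gens_subset_deltaRel {n : ℕ} (θ : Fin n → Set (A × A)) :
    (⋃ i : Fin n, cubeSet i (θ i)) ⊆ DeltaRel σ θ :=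
  Set.subset_sInter (fun _ hR => hR.2)

theorem deltaRel_subset {n : ℕ} (θ : Fin n → Set (A × A)) {R : Set (Cube (Fin n) A)}
    (hR : IsHCongruence σ R) (hgen : (⋃ i : Fin n, cubeSet i (θ i)) ⊆ R) :
    DeltaRel σ θ ⊆ R :=
  Set.sInter_subset_of_mem ⟨hR, hgen⟩

end AuxHC
section AuxFin2

variable {A : Type u} {σ : Signature} [Alg σ A]

def v2 (x y : Bool) : Fin 2 → Bool := fun j => if j = 0 then x else y

@[simp] theorem v2_0 (x y : Bool) : v2 x y 0 = x := if_pos rfl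
@[simp] theorem v2_1 (x y : Bool) : v2 x y 1 = y := if_neg (by decide)

@[simp] theorem sq_v2 (a b c d : A) (x y : Bool) :
    sqCube a b c d (v2 x y) =
      if x then (if y then d else c) else (if y then b else a) := by
  show (if v2 x y 0 = true then _ else _) = _
  rw [v2_0, v2_1]

theorem face2_0 (c : Bool) (γ : Cube (Fin 2) A) (h : {x : Fin 2 // x ≠ 0} → Bool) :
    face (0 : Fin 2) c γ h = γ (v2 c (h ⟨1, by decide⟩)) := by
  show γ _ = γ _
  congr 1
  funext j
  rcases fin2cases j with rfl | rfl
  · rw [dif_pos rfl, v2_0]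
  · rw [dif_neg (by decide), v2_1]

theorem face2_1 (c : Bool) (γ : Cube (Fin 2) A) (h : {x : Fin 2 // x ≠ 1} → Bool) :
    face (1 : Fin 2) c γ h = γ (v2 (h ⟨0, by decide⟩) c) := by
  show γ _ = γ _
  congr 1
  funext j
  rcases fin2cases j with rfl | rfl
  · rw [dif_neg (by decide), v2_0]
  · rw [dif_pos rfl, v2_1]

theorem sqCube_eta (γ : Cube (Fin 2) A) :
    γ = sqCube (γ (v2 false false)) (γ (v2 false true)) (γ (v2 true false)) (γ (v2 true true)) := by
  funext f
  have : f = v2 (f 0) (f 1) := by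
    funext j; rcases fin2cases j with rfl | rfl <;> simp [v2]
  rw [this]
  cases hf0 : f 0 <;> cases hf1 : f 1 <;> simp [sqCube]

theorem mem_sym2_0 {R : Set (Cube (Fin 2) A)} (hR : IsHCongruence σ R) {a b c d : A}
    (h : sqCube a b c d ∈ R) : sqCube c d a b ∈ R := by
  have h2 := hR.mem_symMap h 0
  have heq : symMap 0 (sqCube a b c d) = sqCube c d a b := by
    funext f
    rw [symMap_apply]
    have : (fun j => if j = (0:Fin 2) then !(f 0) else f j) = v2 (!(f 0)) (f 1) := by
      funext j; rcases fin2cases j with rfl | rfl <;> simp [v2]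
    rw [this]
    cases hf0 : f 0 <;> cases hf1 : f 1 <;> simp [sqCube, hf0, hf1]
  rwa [heq] at h2

theorem mem_sym2_1 {R : Set (Cube (Fin 2) A)} (hR : IsHCongruence σ R) {a b c d : A}
    (h : sqCube a b c d ∈ R) : sqCube b a d c ∈ R := by
  have h2 := hR.mem_symMap h 1
  have heq : symMap 1 (sqCube a b c d) = sqCube b a d c := by
    funext f
    rw [symMap_apply]
    have : (fun j => if j = (1:Fin 2) then !(f 1) else f j) = v2 (f 0) (!(f 1)) := by
      funext j; rcases fin2cases j with rfl | rfl <;> simp [v2]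
    rw [this]
    cases hf0 : f 0 <;> cases hf1 : f 1 <;> simp [sqCube, hf0, hf1]
  rwa [heq] at h2

theorem mem_refl2_col0 {R : Set (Cube (Fin 2) A)} (hR : IsHCongruence σ R) {a b c d : A}
    (h : sqCube a b c d ∈ R) : sqCube a a c c ∈ R := by
  have h2 := hR.mem_glue_refl h 1 false
  have heq : glue (1:Fin 2) (face 1 false (sqCube a b c d)) (face 1 false (sqCube a b c d)) =
      sqCube a a c c := by
    funext f
    rw [glue_apply]
    cases hf0 : f 0 <;> cases hf1 : f 1 <;>
      simp [face2_1, hf0, hf1, sqCube, v2_0, v2_1, sq_v2]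
  rwa [heq] at h2

theorem mem_comp2_0 {R : Set (Cube (Fin 2) A)} (hR : IsHCongruence σ R) {a b c d e f : A}
    (h1 : sqCube a b c d ∈ R) (h2 : sqCube c d e f ∈ R) : sqCube a b e f ∈ R := by
  have hfeq : face (0:Fin 2) true (sqCube a b c d) = face 0 false (sqCube c d e f) := by
    funext h
    rw [face2_0, face2_0]
    cases hh : h ⟨1, by decide⟩ <;> simp [hh]
  have h3 := hR.mem_glue_trans h1 h2 0 hfeq
  have heq : glue (0:Fin 2) (face 0 false (sqCube a b c d)) (face 0 true (sqCube c d e f)) =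
      sqCube a b e f := by
    funext f'
    rw [glue_apply]
    cases hf0 : f' 0 <;> cases hf1 : f' 1 <;>
      simp [face2_0, hf0, hf1, sqCube, sq_v2]
  rwa [heq] at h3

theorem mem_comp2_1 {R : Set (Cube (Fin 2) A)} (hR : IsHCongruence σ R) {a b c d e f : A}
    (h1 : sqCube a b c d ∈ R) (h2 : sqCube b e d f ∈ R) : sqCube a e c f ∈ R := by
  have hfeq : face (1:Fin 2) true (sqCube a b c d) = face 1 false (sqCube b e d f) := by
    funext h
    rw [face2_1, face2_1]
    cases hh : h ⟨0, by decide⟩ <;> simp [hh]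
  have h3 := hR.mem_glue_trans h1 h2 1 hfeq
  have heq : glue (1:Fin 2) (face 1 false (sqCube a b c d)) (face 1 true (sqCube b e d f)) =
      sqCube a e c f := by
    funext f'
    rw [glue_apply]
    cases hf0 : f' 0 <;> cases hf1 : f' 1 <;>
      simp [face2_1, hf0, hf1, sqCube, sq_v2]
  rwa [heq] at h3

theorem comCube_two (x y : A) : comCube 2 x y = sqCube x x x y := by
  funext f
  show (if ∀ i, f i = true then y else x) = _
  by_cases h : ∀ i : Fin 2, f i = true
  · rw [if_pos h]
    simp [sqCube, h 0, h 1]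
  · rw [if_neg h]
    rcases not_forall.mp h with ⟨i, hi⟩
    have hi' := (Bool.not_eq_true _).mp hi
    rcases fin2cases i with rfl | rfl <;> simp [sqCube, hi']

end AuxFin2
section AuxFin3

variable {A : Type u} {σ : Signature} [Alg σ A]

def pat3 (m : Bool → Bool → Bool → A) : Cube (Fin 3) A :=
  fun f => m (f 0) (f 1) (f 2)

theorem pat3_congr {m m' : Bool → Bool → Bool → A} (h : ∀ a b c, m a b c = m' a b c) :
    pat3 m = pat3 m' := by
  funext f; exact h _ _ _

def v3 (x y z : Bool) : Fin 3 → Bool := fun j => if j = 0 then x else if j = 1 then y else z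

@[simp] theorem v3_0 (x y z : Bool) : v3 x y z 0 = x := if_pos rfl
@[simp] theorem v3_1 (x y z : Bool) : v3 x y z 1 = y := by
  show (if (1:Fin 3) = 0 then x else if (1:Fin 3) = 1 then y else z) = y
  rw [if_neg (by decide), if_pos rfl]
@[simp] theorem v3_2 (x y z : Bool) : v3 x y z 2 = z := by
  show (if (2:Fin 3) = 0 then x else if (2:Fin 3) = 1 then y else z) = z
  rw [if_neg (by decide), if_neg (by decide)]

@[simp] theorem pat3_v3 (m : Bool → Bool → Bool → A) (x y z : Bool) :
    pat3 m (v3 x y z) = m x y z := by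
  show m (v3 x y z 0) (v3 x y z 1) (v3 x y z 2) = m x y z
  rw [v3_0, v3_1, v3_2]

theorem v3_eta (f : Fin 3 → Bool) : f = v3 (f 0) (f 1) (f 2) := by
  funext j
  rcases fin3cases j with rfl | rfl | rfl <;> simp

theorem face3_0 (c : Bool) (γ : Cube (Fin 3) A) (h : {x : Fin 3 // x ≠ 0} → Bool) :
    face (0 : Fin 3) c γ h = γ (v3 c (h ⟨1, by decide⟩) (h ⟨2, by decide⟩)) := by
  show γ _ = γ _
  congr 1
  funext j
  rcases fin3cases j with rfl | rfl | rfl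
  · rw [dif_pos rfl, v3_0]
  · rw [dif_neg (by decide), v3_1]
  · rw [dif_neg (by decide), v3_2]

theorem face3_1 (c : Bool) (γ : Cube (Fin 3) A) (h : {x : Fin 3 // x ≠ 1} → Bool) :
    face (1 : Fin 3) c γ h = γ (v3 (h ⟨0, by decide⟩) c (h ⟨2, by decide⟩)) := by
  show γ _ = γ _
  congr 1
  funext j
  rcases fin3cases j with rfl | rfl | rfl
  · rw [dif_neg (by decide), v3_0]
  · rw [dif_pos rfl, v3_1]
  · rw [dif_neg (by decide), v3_2]

theorem face3_2 (c : Bool) (γ : Cube (Fin 3) A) (h : {x : Fin 3 // x ≠ 2} → Bool) :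
    face (2 : Fin 3) c γ h = γ (v3 (h ⟨0, by decide⟩) (h ⟨1, by decide⟩) c) := by
  show γ _ = γ _
  congr 1
  funext j
  rcases fin3cases j with rfl | rfl | rfl
  · rw [dif_neg (by decide), v3_0]
  · rw [dif_neg (by decide), v3_1]
  · rw [dif_pos rfl, v3_2]

theorem mem_sym3_1 {R : Set (Cube (Fin 3) A)} (hR : IsHCongruence σ R)
    {m : Bool → Bool → Bool → A} (h : pat3 m ∈ R) :
    pat3 (fun a b c => m a (!b) c) ∈ R := by
  have h2 := hR.mem_symMap h 1
  have heq : symMap 1 (pat3 m) = pat3 (fun a b c => m a (!b) c) := by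
    funext f
    rw [symMap_apply]
    have : (fun j => if j = (1:Fin 3) then !(f 1) else f j) = v3 (f 0) (!(f 1)) (f 2) := by
      funext j; rcases fin3cases j with rfl | rfl | rfl <;> simp [v3]
    rw [this, pat3_v3]
    rfl
  rwa [heq] at h2

theorem mem_sym3_2 {R : Set (Cube (Fin 3) A)} (hR : IsHCongruence σ R)
    {m : Bool → Bool → Bool → A} (h : pat3 m ∈ R) :
    pat3 (fun a b c => m a b (!c)) ∈ R := by
  have h2 := hR.mem_symMap h 2
  have heq : symMap 2 (pat3 m) = pat3 (fun a b c => m a b (!c)) := by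
    funext f
    rw [symMap_apply]
    have : (fun j => if j = (2:Fin 3) then !(f 2) else f j) = v3 (f 0) (f 1) (!(f 2)) := by
      funext j; rcases fin3cases j with rfl | rfl | rfl <;> simp [v3]
    rw [this, pat3_v3]
    rfl
  rwa [heq] at h2

theorem mem_refl3_0 {R : Set (Cube (Fin 3) A)} (hR : IsHCongruence σ R)
    {m : Bool → Bool → Bool → A} (c0 : Bool) (h : pat3 m ∈ R) :
    pat3 (fun _ b c => m c0 b c) ∈ R := by
  have h2 := hR.mem_glue_refl h 0 c0
  have hgf : glue (0:Fin 3) (face 0 c0 (pat3 m)) (face 0 c0 (pat3 m)) =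
      pat3 (fun _ b c => m c0 b c) := by
    funext f
    rw [glue_apply]
    rw [ite_self]
    rw [face3_0]
    show pat3 m (v3 c0 (f 1) (f 2)) = _
    rw [pat3_v3]
    rfl
  rwa [hgf] at h2

theorem mem_refl3_1 {R : Set (Cube (Fin 3) A)} (hR : IsHCongruence σ R)
    {m : Bool → Bool → Bool → A} (c0 : Bool) (h : pat3 m ∈ R) :
    pat3 (fun a _ c => m a c0 c) ∈ R := by
  have h2 := hR.mem_glue_refl h 1 c0
  have hgf : glue (1:Fin 3) (face 1 c0 (pat3 m)) (face 1 c0 (pat3 m)) =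
      pat3 (fun a _ c => m a c0 c) := by
    funext f
    rw [glue_apply, ite_self, face3_1]
    show pat3 m (v3 (f 0) c0 (f 2)) = _
    rw [pat3_v3]
    rfl
  rwa [hgf] at h2

theorem mem_refl3_2 {R : Set (Cube (Fin 3) A)} (hR : IsHCongruence σ R)
    {m : Bool → Bool → Bool → A} (c0 : Bool) (h : pat3 m ∈ R) :
    pat3 (fun a b _ => m a b c0) ∈ R := by
  have h2 := hR.mem_glue_refl h 2 c0
  have hgf : glue (2:Fin 3) (face 2 c0 (pat3 m)) (face 2 c0 (pat3 m)) =
      pat3 (fun a b _ => m a b c0) := by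
    funext f
    rw [glue_apply, ite_self, face3_2]
    show pat3 m (v3 (f 0) (f 1) c0) = _
    rw [pat3_v3]
    rfl
  rwa [hgf] at h2

theorem mem_comp3_0 {R : Set (Cube (Fin 3) A)} (hR : IsHCongruence σ R)
    {m m' : Bool → Bool → Bool → A} (h1 : pat3 m ∈ R) (h2 : pat3 m' ∈ R)
    (hmatch : ∀ b c, m true b c = m' false b c) :
    pat3 (fun a b c => if a then m' true b c else m false b c) ∈ R := by
  have hfeq : face (0:Fin 3) true (pat3 m) = face 0 false (pat3 m') := by
    funext h
    rw [face3_0, face3_0, pat3_v3, pat3_v3]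
    exact hmatch _ _
  have h3 := hR.mem_glue_trans h1 h2 0 hfeq
  have heq : glue (0:Fin 3) (face 0 false (pat3 m)) (face 0 true (pat3 m')) =
      pat3 (fun a b c => if a then m' true b c else m false b c) := by
    funext f
    rw [glue_apply]
    cases hf : f 0
    · rw [if_neg (by simp [hf])]
      rw [face3_0]
      show pat3 m (v3 false (f 1) (f 2)) = pat3 _ f
      rw [pat3_v3]
      show m false (f 1) (f 2) = if f 0 = true then _ else m false (f 1) (f 2)
      rw [if_neg (by simp [hf])]
    · rw [if_pos rfl, face3_0]
      show pat3 m' (v3 true (f 1) (f 2)) = pat3 _ f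
      rw [pat3_v3]
      show m' true (f 1) (f 2) = if f 0 = true then m' true (f 1) (f 2) else _
      rw [if_pos hf]
  rwa [heq] at h3

theorem mem_comp3_1 {R : Set (Cube (Fin 3) A)} (hR : IsHCongruence σ R)
    {m m' : Bool → Bool → Bool → A} (h1 : pat3 m ∈ R) (h2 : pat3 m' ∈ R)
    (hmatch : ∀ a c, m a true c = m' a false c) :
    pat3 (fun a b c => if b then m' a true c else m a false c) ∈ R := by
  have hfeq : face (1:Fin 3) true (pat3 m) = face 1 false (pat3 m') := by
    funext h
    rw [face3_1, face3_1, pat3_v3, pat3_v3]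
    exact hmatch _ _
  have h3 := hR.mem_glue_trans h1 h2 1 hfeq
  have heq : glue (1:Fin 3) (face 1 false (pat3 m)) (face 1 true (pat3 m')) =
      pat3 (fun a b c => if b then m' a true c else m a false c) := by
    funext f
    rw [glue_apply]
    cases hf : f 1
    · rw [if_neg (by simp [hf]), face3_1]
      show pat3 m (v3 (f 0) false (f 2)) = pat3 _ f
      rw [pat3_v3]
      show m (f 0) false (f 2) = if f 1 = true then _ else m (f 0) false (f 2)
      rw [if_neg (by simp [hf])]
    · rw [if_pos rfl, face3_1]
      show pat3 m' (v3 (f 0) true (f 2)) = pat3 _ f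
      rw [pat3_v3]
      show m' (f 0) true (f 2) = if f 1 = true then m' (f 0) true (f 2) else _
      rw [if_pos hf]
  rwa [heq] at h3

theorem mem_comp3_2 {R : Set (Cube (Fin 3) A)} (hR : IsHCongruence σ R)
    {m m' : Bool → Bool → Bool → A} (h1 : pat3 m ∈ R) (h2 : pat3 m' ∈ R)
    (hmatch : ∀ a b, m a b true = m' a b false) :
    pat3 (fun a b c => if c then m' a b true else m a b false) ∈ R := by
  have hfeq : face (2:Fin 3) true (pat3 m) = face 2 false (pat3 m') := by
    funext h
    rw [face3_2, face3_2, pat3_v3, pat3_v3]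
    exact hmatch _ _
  have h3 := hR.mem_glue_trans h1 h2 2 hfeq
  have heq : glue (2:Fin 3) (face 2 false (pat3 m)) (face 2 true (pat3 m')) =
      pat3 (fun a b c => if c then m' a b true else m a b false) := by
    funext f
    rw [glue_apply]
    cases hf : f 2
    · rw [if_neg (by simp [hf]), face3_2]
      show pat3 m (v3 (f 0) (f 1) false) = pat3 _ f
      rw [pat3_v3]
      show m (f 0) (f 1) false = if f 2 = true then _ else m (f 0) (f 1) false
      rw [if_neg (by simp [hf])]
    · rw [if_pos rfl, face3_2]
      show pat3 m' (v3 (f 0) (f 1) true) = pat3 _ f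
      rw [pat3_v3]
      show m' (f 0) (f 1) true = if f 2 = true then m' (f 0) (f 1) true else _
      rw [if_pos hf]
  rwa [heq] at h3

end AuxFin3
section Surgery2

variable {A : Type u} {σ : Signature} [Alg σ A] {R : Set (Cube (Fin 2) A)}

theorem com_sym2 (hR : IsHCongruence σ R) {x y : A} (h : sqCube x x x y ∈ R) :
    sqCube y y y x ∈ R := by
  have h1 : sqCube y x x x ∈ R := mem_sym2_0 hR (mem_sym2_1 hR h)
  have h2 : sqCube y y x x ∈ R := mem_refl2_col0 hR h1
  have h3 : sqCube y y x y ∈ R := mem_comp2_0 hR h2 h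
  exact mem_sym2_1 hR h3

theorem com_trans2 (hR : IsHCongruence σ R) {x y z : A}
    (hxy : sqCube x x x y ∈ R) (hyz : sqCube y y y z ∈ R) :
    sqCube x x x z ∈ R := by
  have h2 : sqCube y y x x ∈ R :=
    mem_refl2_col0 hR (mem_sym2_0 hR (mem_sym2_1 hR hxy))
  have h2' : sqCube x x y y ∈ R := mem_sym2_0 hR h2
  have h3 : sqCube x x y z ∈ R := mem_comp2_0 hR h2' hyz
  exact mem_comp2_1 hR hxy h3

theorem com_shift2 (hR : IsHCongruence σ R) {a b c d : A}
    (hγ : sqCube a b c d ∈ R) (hab : sqCube a a a b ∈ R) :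
    sqCube c c c d ∈ R := by
  have s1 : sqCube c d a b ∈ R := mem_sym2_0 hR hγ
  have s2 : sqCube a b a a ∈ R := mem_sym2_0 hR hab
  have s3 : sqCube c d a a ∈ R := mem_comp2_0 hR s1 s2
  have s5 : sqCube c c a a ∈ R := mem_refl2_col0 hR s3
  have s6 : sqCube c c a b ∈ R := mem_comp2_0 hR s5 hab
  exact mem_comp2_0 hR s6 hγ

end Surgery2

section CountLemmas

theorem lastIdx_two : lastIdx 2 = (1 : Fin 2) := rfl

theorem lastIdx_three : lastIdx 3 = (2 : Fin 3) := rfl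

theorem unique_I2 (j : {x : Fin 2 // x ≠ lastIdx 2}) : j = ⟨0, by decide⟩ := by
  rcases j with ⟨jv, hj⟩
  rcases fin2cases jv with rfl | rfl
  · rfl
  · exact absurd rfl hj

theorem const_I2 (f : {x : Fin 2 // x ≠ lastIdx 2} → Bool) :
    f = fun _ => f ⟨0, by decide⟩ := by
  funext j; rw [unique_I2 j]

theorem decode2 {P : ({x : Fin 2 // x ≠ lastIdx 2} → Bool) → Prop}
    (h : Nat.card {f // P f} = 1) :
    ∃ b : Bool, P (fun _ => b) ∧ ¬ P (fun _ => !b) := by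
  classical
  rw [Nat.card_eq_one_iff_unique] at h
  obtain ⟨hsub, ⟨⟨f, hf⟩⟩⟩ := h
  refine ⟨f ⟨0, by decide⟩, ?_, ?_⟩
  · have := const_I2 f
    rw [← this]
    exact hf
  · intro hcon
    have h2 : (⟨fun _ => !(f ⟨0, by decide⟩), hcon⟩ : {f // P f}) = ⟨f, hf⟩ :=
      hsub.allEq _ _
    have h3 := congrArg (fun z : {f // P f} => z.1 ⟨0, by decide⟩) h2
    simp only at h3
    exact absurd h3 (by cases hb : f ⟨0, by decide⟩ <;> simp [hb])

theorem I3cases (j : {x : Fin 3 // x ≠ lastIdx 3}) :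
    j = ⟨0, by decide⟩ ∨ j = ⟨1, by decide⟩ := by
  rcases j with ⟨jv, hj⟩
  rcases fin3cases jv with rfl | rfl | rfl
  · exact Or.inl rfl
  · exact Or.inr rfl
  · exact absurd rfl hj

theorem ext_I3 {f g : {x : Fin 3 // x ≠ lastIdx 3} → Bool}
    (h0 : f ⟨0, by decide⟩ = g ⟨0, by decide⟩)
    (h1 : f ⟨1, by decide⟩ = g ⟨1, by decide⟩) : f = g := by
  funext j; rcases I3cases j with rfl | rfl <;> assumption

theorem encode3 {P : ({x : Fin 3 // x ≠ lastIdx 3} → Bool) → Prop}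
    (g : {x : Fin 3 // x ≠ lastIdx 3} → Bool) (hne : ∀ f, P f ↔ f ≠ g) :
    Nat.card {f // P f} = 2 ^ (Fintype.card (Fin 3) - 1) - 1 := by
  classical
  have e : {f // P f} ≃ {f : {x : Fin 3 // x ≠ lastIdx 3} → Bool // ¬ (f = g)} :=
    Equiv.subtypeEquivRight hne
  rw [Nat.card_congr e, Nat.card_eq_fintype_card, Fintype.card_subtype_compl,
    Fintype.card_subtype_eq]
  have hI3 : Fintype.card {x : Fin 3 // x ≠ lastIdx 3} = 2 := by
    have : Fintype.card {x : Fin 3 // ¬ (x = lastIdx 3)} =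
        Fintype.card (Fin 3) - Fintype.card {x : Fin 3 // x = lastIdx 3} :=
      Fintype.card_subtype_compl _
    rw [Fintype.card_subtype_eq, Fintype.card_fin] at this
    exact this
  rw [Fintype.card_fun, hI3, Fintype.card_fin, Fintype.card_bool]

end CountLemmas
section Eps2

variable {A : Type u} (σ : Signature) [Alg σ A] (θ1 θ2 : Set (A × A))

theorem cubeAt0_sq (x y : A) : cubeAt (0 : Fin 2) ((x, y) : A × A) = sqCube x x y y := by
  funext f; cases hf0 : f 0 <;> cases hf1 : f 1 <;> simp [cubeAt, sqCube, hf0, hf1]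

theorem cubeAt1_sq (x y : A) : cubeAt (1 : Fin 2) ((x, y) : A × A) = sqCube x y x y := by
  funext f; cases hf0 : f 0 <;> cases hf1 : f 1 <;> simp [cubeAt, sqCube, hf0, hf1]

theorem gen2_0 {x y : A} (hxy : (x, y) ∈ θ1) :
    sqCube x x y y ∈ DeltaRel σ ![θ1, θ2] := by
  apply gens_subset_deltaRel
  refine Set.mem_iUnion.mpr ⟨0, ⟨(x, y), ?_, cubeAt0_sq x y⟩⟩
  simpa using hxy

theorem gen2_1 {x y : A} (hxy : (x, y) ∈ θ2) :
    sqCube x y x y ∈ DeltaRel σ ![θ1, θ2] := by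
  apply gens_subset_deltaRel
  refine Set.mem_iUnion.mpr ⟨1, ⟨(x, y), ?_, cubeAt1_sq x y⟩⟩
  simpa using hxy

def eps2 : Set (A × A) := {p : A × A | sqCube p.1 p.1 p.1 p.2 ∈ DeltaRel σ ![θ1, θ2]}

theorem eps2_isCong (h1 : IsCongruence σ θ1) : IsCongruence σ (eps2 σ θ1 θ2) := by
  have hD := deltaRel_isHCong (σ := σ) (A := A) (![θ1, θ2])
  refine ⟨?_, ?_, ?_, ?_⟩
  · intro a
    show sqCube a a a a ∈ DeltaRel σ ![θ1, θ2]
    exact gen2_0 σ θ1 θ2 (h1.1 a)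
  · intro a b hab
    exact com_sym2 hD hab
  · intro a b c hab hbc
    exact com_trans2 hD hab hbc
  · intro o x y hk
    show sqCube (Alg.interp (A := A) o x) (Alg.interp (A := A) o x)
      (Alg.interp (A := A) o x) (Alg.interp (A := A) o y) ∈ DeltaRel σ ![θ1, θ2]
    have hc := hD.1.1 o (fun k => sqCube (x k) (x k) (x k) (y k)) (fun k => hk k)
    have heq : (fun f => Alg.interp (A := A) o fun k => sqCube (x k) (x k) (x k) (y k) f) =
        sqCube (Alg.interp (A := A) o x) (Alg.interp (A := A) o x)
          (Alg.interp (A := A) o x) (Alg.interp (A := A) o y) := by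
      funext f
      cases hf0 : f 0 <;> cases hf1 : f 1 <;> simp [sqCube, hf0, hf1]
    rwa [heq] at hc

theorem face_last2_const (γ : Cube (Fin 2) A) (c b : Bool) :
    face (lastIdx 2) c γ (fun _ => b) = γ (v2 b c) :=
  face2_1 c γ _

theorem eps2_centrality : Centrality (eps2 σ θ1 θ2) (lastIdx 2) (DeltaRel σ ![θ1, θ2]) := by
  rintro ⟨γ, hγ, hcard⟩
  have hD := deltaRel_isHCong (σ := σ) (A := A) (![θ1, θ2])
  have hcard' : Nat.card {f // (face (lastIdx 2) false γ f, face (lastIdx 2) true γ f) ∈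
      eps2 σ θ1 θ2} = 1 := by
    rw [hcard]
    simp [Fintype.card_fin]
  obtain ⟨b, hb, hnb⟩ := decode2 hcard'
  rw [face_last2_const, face_last2_const] at hb hnb
  have hγsq := sqCube_eta γ
  cases b
  · -- hb about row false; shift up
    apply hnb
    show (γ (v2 (!false) false), γ (v2 (!false) true)) ∈ eps2 σ θ1 θ2
    have hs : sqCube (γ (v2 false false)) (γ (v2 false true)) (γ (v2 true false))
        (γ (v2 true true)) ∈ DeltaRel σ ![θ1, θ2] := by rwa [← hγsq]
    have := com_shift2 hD hs hb
    exact this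
  · apply hnb
    show (γ (v2 (!true) false), γ (v2 (!true) true)) ∈ eps2 σ θ1 θ2
    have hs : sqCube (γ (v2 true false)) (γ (v2 true true)) (γ (v2 false false))
        (γ (v2 false true)) ∈ DeltaRel σ ![θ1, θ2] := by
      apply mem_sym2_0 hD
      rwa [← hγsq]
    have := com_shift2 hD hs hb
    exact this

theorem hComm2_subset_eps2 (h1 : IsCongruence σ θ1) :
    hComm σ 2 ![θ1, θ2] ⊆ eps2 σ θ1 θ2 :=
  Set.sInter_subset_of_mem ⟨eps2_isCong σ θ1 θ2 h1, eps2_centrality σ θ1 θ2⟩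

end Eps2
section Expand

variable {A : Type u} (σ : Signature) [Alg σ A] (θ0 θ1 θ2 : Set (A × A))

def Eexp (g : Cube (Fin 2) A) : Cube (Fin 3) A := fun f => g (fun j => f j.succ)

def rho (i : Fin 2) (h : {x : Fin 3 // x ≠ i.succ} → Bool) : {x : Fin 2 // x ≠ i} → Bool :=
  fun j => h ⟨j.val.succ, fun e => j.2 (Fin.succ_injective _ e)⟩

theorem faceE {A : Type u} (i : Fin 2) (c : Bool) (g : Cube (Fin 2) A) :
    face i.succ c (Eexp g) = fun h => face i c g (rho i h) := by
  funext h
  show g _ = g _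
  congr 1
  funext j
  by_cases hj : j = i
  · subst hj
    show (if hh : j.succ = j.succ then c else h ⟨j.succ, hh⟩) =
      if hh : j = j then c else rho j h ⟨j, hh⟩
    rw [dif_pos rfl, dif_pos rfl]
  · show (if hh : j.succ = i.succ then c else h ⟨j.succ, hh⟩) =
      if hh : j = i then c else rho i h ⟨j, hh⟩
    rw [dif_neg (fun e => hj (Fin.succ_injective _ e)), dif_neg hj]
    rfl

theorem faceE_eq {A : Type u} {i : Fin 2} {c c' : Bool} {g g' : Cube (Fin 2) A}
    (h : face i c g = face i c' g') :
    face i.succ c (Eexp g) = face i.succ c' (Eexp g') := by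
  rw [faceE, faceE, h]

theorem E_glue_faces {A : Type u} {i : Fin 2} {c c' : Bool} {g g' w : Cube (Fin 2) A}
    (hwF : face i false w = face i c g) (hwT : face i true w = face i c' g') :
    Eexp w = glue i.succ (face i.succ c (Eexp g)) (face i.succ c' (Eexp g')) := by
  conv_lhs => rw [eq_glue i.succ (Eexp w)]
  rw [faceE_eq hwF, faceE_eq hwT]

theorem matrix_succ (i : Fin 2) :
    (![θ0, θ1, θ2] : Fin 3 → Set (A × A)) i.succ = (![θ1, θ2] : Fin 2 → Set (A × A)) i := by
  rcases fin2cases i with rfl | rfl <;> rfl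

theorem E_mem_delta {g : Cube (Fin 2) A} (hg : g ∈ DeltaRel σ ![θ1, θ2]) :
    Eexp g ∈ DeltaRel σ ![θ0, θ1, θ2] := by
  have hD3 := deltaRel_isHCong (σ := σ) (A := A) (![θ0, θ1, θ2])
  have main : DeltaRel σ ![θ1, θ2] ⊆ {g : Cube (Fin 2) A | Eexp g ∈ DeltaRel σ ![θ0, θ1, θ2]} := by
    apply deltaRel_subset
    · refine ⟨⟨?_, ?_, ?_⟩, ?_⟩
      · intro o γk hk
        simp only [Set.mem_setOf_eq]
        have heq : Eexp (fun f => Alg.interp (A := A) o fun k => γk k f) =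
            (fun f => Alg.interp (A := A) o fun k => Eexp (γk k) f) := rfl
        rw [heq]
        exact hD3.1.1 o _ hk
      · intro i a b hab
        obtain ⟨g', hg'R, heq⟩ := hab
        have ha : a = face i false g' := (Prod.mk.injEq _ _ _ _ ▸ heq).1
        have hb : b = face i true g' := (Prod.mk.injEq _ _ _ _ ▸ heq).2
        constructor
        · refine ⟨glue i a a, ?_, ?_⟩
          · simp only [Set.mem_setOf_eq]
            rw [E_glue_faces (c := false) (c' := false) (g := g') (g' := g')
              (by rw [face_glue_false, ha]) (by rw [face_glue_true, ha])]
            exact hD3.mem_glue_refl hg'R i.succ false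
          · rw [face_glue_false, face_glue_true]
        · refine ⟨glue i b b, ?_, ?_⟩
          · simp only [Set.mem_setOf_eq]
            rw [E_glue_faces (c := true) (c' := true) (g := g') (g' := g')
              (by rw [face_glue_false, hb]) (by rw [face_glue_true, hb])]
            exact hD3.mem_glue_refl hg'R i.succ true
          · rw [face_glue_false, face_glue_true]
      · intro i a b hab
        obtain ⟨g', hg'R, heq⟩ := hab
        have ha : a = face i false g' := (Prod.mk.injEq _ _ _ _ ▸ heq).1
        have hb : b = face i true g' := (Prod.mk.injEq _ _ _ _ ▸ heq).2
        refine ⟨glue i b a, ?_, ?_⟩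
        · simp only [Set.mem_setOf_eq]
          rw [E_glue_faces (c := true) (c' := false) (g := g') (g' := g')
            (by rw [face_glue_false, hb]) (by rw [face_glue_true, ha])]
          exact hD3.mem_symMap hg'R i.succ
        · rw [face_glue_false, face_glue_true]
      · intro i a b c hab hbc
        obtain ⟨g', hg'R, heq⟩ := hab
        obtain ⟨g'', hg''R, heq'⟩ := hbc
        have ha : a = face i false g' := (Prod.mk.injEq _ _ _ _ ▸ heq).1
        have hb : b = face i true g' := (Prod.mk.injEq _ _ _ _ ▸ heq).2
        have hb' : b = face i false g'' := (Prod.mk.injEq _ _ _ _ ▸ heq').1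
        have hc : c = face i true g'' := (Prod.mk.injEq _ _ _ _ ▸ heq').2
        refine ⟨glue i a c, ?_, ?_⟩
        · simp only [Set.mem_setOf_eq]
          rw [E_glue_faces (c := false) (c' := true) (g := g') (g' := g'')
            (by rw [face_glue_false, ha]) (by rw [face_glue_true, hc])]
          exact hD3.mem_glue_trans hg'R hg''R i.succ (faceE_eq (show face i true g' = face i false g'' by rw [← hb, hb']))
        · rw [face_glue_false, face_glue_true]
    · intro x hx
      obtain ⟨Si, hSi⟩ := Set.mem_iUnion.mp hx
      obtain ⟨p, hp, rfl⟩ := hSi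
      simp only [Set.mem_setOf_eq]
      have heq : Eexp (cubeAt Si p) = cubeAt Si.succ p := rfl
      rw [heq]
      apply gens_subset_deltaRel
      refine Set.mem_iUnion.mpr ⟨Si.succ, ⟨p, ?_, rfl⟩⟩
      rw [matrix_succ]
      exact hp
  exact main hg

end Expand
section KS

variable {A : Type u} {σ : Signature} [Alg σ A]

def Kc (s t : Bool → A) : Cube (Fin 3) A :=
  pat3 (fun a b c => if b && c then t a else s a)

theorem mem_of_pat3_eq {R : Set (Cube (Fin 3) A)} {m m' : Bool → Bool → Bool → A}
    (h : pat3 m ∈ R) (he : ∀ a b c, m a b c = m' a b c) : pat3 m' ∈ R := by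
  rw [← pat3_congr he]; exact h

theorem mem_sym3_0 {R : Set (Cube (Fin 3) A)} (hR : IsHCongruence σ R)
    {m : Bool → Bool → Bool → A} (h : pat3 m ∈ R) :
    pat3 (fun a b c => m (!a) b c) ∈ R := by
  have h2 := hR.mem_symMap h 0
  have heq : symMap 0 (pat3 m) = pat3 (fun a b c => m (!a) b c) := by
    funext f
    rw [symMap_apply]
    have : (fun j => if j = (0:Fin 3) then !(f 0) else f j) = v3 (!(f 0)) (f 1) (f 2) := by
      funext j; rcases fin3cases j with rfl | rfl | rfl <;> simp [v3]
    rw [this, pat3_v3]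
    rfl
  rwa [heq] at h2

theorem Kc_congr {s s' t t' : Bool → A} (hs : ∀ b, s b = s' b) (ht : ∀ b, t b = t' b) :
    Kc s t = Kc s' t' :=
  pat3_congr (fun a b c => by rw [hs a, ht a])

theorem mem_Kc_of_eq {R : Set (Cube (Fin 3) A)} {s s' t t' : Bool → A}
    (h : Kc s t ∈ R) (hs : ∀ b, s' b = s b) (ht : ∀ b, t' b = t b) : Kc s' t' ∈ R := by
  rw [Kc_congr hs ht]; exact h

theorem K_swap {R : Set (Cube (Fin 3) A)} (hR : IsHCongruence σ R) {s t : Bool → A}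
    (h : Kc s t ∈ R) : Kc t s ∈ R := by
  have h1 := mem_sym3_1 hR (mem_sym3_2 hR h)
  have h2 := mem_refl3_2 hR false h1
  have h3 := mem_comp3_1 hR h2 h (fun a c => by cases a <;> cases c <;> rfl)
  have h4 := mem_sym3_2 hR h3
  exact mem_of_pat3_eq h4 (fun a b c => by cases a <;> cases b <;> cases c <;> rfl)

theorem K_trans {R : Set (Cube (Fin 3) A)} (hR : IsHCongruence σ R) {s t u : Bool → A}
    (hst : Kc s t ∈ R) (htu : Kc t u ∈ R) : Kc s u ∈ R := by
  have h1 := mem_sym3_1 hR (mem_sym3_2 hR hst)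
  have h2 := mem_refl3_2 hR false h1
  have h2' := mem_sym3_1 hR h2
  have h3 := mem_comp3_1 hR h2' htu (fun a c => by cases a <;> cases c <;> rfl)
  have h4 := mem_comp3_2 hR hst h3 (fun a b => by cases a <;> cases b <;> rfl)
  exact mem_of_pat3_eq h4 (fun a b c => by cases a <;> cases b <;> cases c <;> rfl)

theorem K_ss {R : Set (Cube (Fin 3) A)} (hR : IsHCongruence σ R) {s t : Bool → A}
    (h : Kc s t ∈ R) : Kc s s ∈ R := by
  have h2 := mem_refl3_2 hR false h
  exact mem_of_pat3_eq h2 (fun a b c => by cases a <;> cases b <;> cases c <;> rfl)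

theorem K_tt {R : Set (Cube (Fin 3) A)} (hR : IsHCongruence σ R) {s t : Bool → A}
    (h : Kc s t ∈ R) : Kc t t ∈ R := by
  have h2 := mem_refl3_1 hR true (mem_refl3_2 hR true h)
  exact mem_of_pat3_eq h2 (fun a b c => by cases a <;> cases b <;> cases c <;> rfl)

theorem K_comp0 {R : Set (Cube (Fin 3) A)} (hR : IsHCongruence σ R) {s t s' t' : Bool → A}
    (h1 : Kc s t ∈ R) (h2 : Kc s' t' ∈ R)
    (hs : s true = s' false) (ht : t true = t' false) :
    Kc (fun b => if b then s' true else s false) (fun b => if b then t' true else t false) ∈ R := by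
  have h3 := mem_comp3_0 hR h1 h2 (fun b c => by cases b <;> cases c <;> simp [hs, ht])
  exact mem_of_pat3_eq h3 (fun a b c => by cases a <;> cases b <;> cases c <;> rfl)

theorem K_refl0 {R : Set (Cube (Fin 3) A)} (hR : IsHCongruence σ R) {s t : Bool → A}
    (c0 : Bool) (h : Kc s t ∈ R) : Kc (fun _ => s c0) (fun _ => t c0) ∈ R := by
  have h2 := mem_refl3_0 hR c0 h
  exact mem_of_pat3_eq h2 (fun a b c => rfl)

theorem K_sym0 {R : Set (Cube (Fin 3) A)} (hR : IsHCongruence σ R) {s t : Bool → A}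
    (h : Kc s t ∈ R) : Kc (fun b => s (!b)) (fun b => t (!b)) ∈ R := by
  have h2 := mem_sym3_0 hR h
  exact mem_of_pat3_eq h2 (fun a b c => rfl)

/-! ### columns -/

def col (c : Bool) (γ : Cube (Fin 2) A) : Bool → A := fun b => γ (v2 b c)

theorem col_face0 (c b b1 : Bool) (γ : Cube (Fin 2) A) :
    face (0 : Fin 2) b1 γ (fun j => v2 b c j.val) = col c γ b1 := by
  rw [face2_0]
  rfl

theorem col_face1 (c b c1 : Bool) (γ : Cube (Fin 2) A) :
    face (1 : Fin 2) c1 γ (fun j => v2 b c j.val) = col c1 γ b := by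
  rw [face2_1]
  rfl

theorem col_glue0 (c b1 b2 : Bool) (γ γ' : Cube (Fin 2) A) :
    col c (glue 0 (face 0 b1 γ) (face 0 b2 γ')) =
      fun b => if b then col c γ' b2 else col c γ b1 := by
  funext b
  show glue 0 (face 0 b1 γ) (face 0 b2 γ') (v2 b c) = _
  rw [glue_apply, v2_0]
  cases b
  · rw [if_neg (by simp), col_face0]
    simp
  · rw [if_pos rfl, col_face0]
    simp

theorem col_glue1 (c c1 c2 : Bool) (γ γ' : Cube (Fin 2) A) :
    col c (glue 1 (face 1 c1 γ) (face 1 c2 γ')) =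
      if c then col c2 γ' else col c1 γ := by
  funext b
  show glue 1 (face 1 c1 γ) (face 1 c2 γ') (v2 b c) = _
  rw [glue_apply, v2_1]
  cases c
  · rw [if_neg (by simp), col_face1]
    simp
  · rw [if_pos rfl, col_face1]
    simp

theorem col_match0 {g g' : Cube (Fin 2) A} (h : face (0:Fin 2) true g = face 0 false g')
    (c : Bool) : col c g true = col c g' false := by
  have h2 := congrFun h (fun _ => c)
  rw [face2_0, face2_0] at h2
  exact h2

theorem col_match1 {g g' : Cube (Fin 2) A} (h : face (1:Fin 2) true g = face 1 false g') :
    col true g = col false g' := by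
  funext b
  have h2 := congrFun h (fun _ => b)
  rw [face2_1, face2_1] at h2
  exact h2

theorem E_sq_K (x y : A) : Eexp (sqCube x x x y) = Kc (fun _ => x) (fun _ => y) := by
  funext f
  show sqCube x x x y (fun j => f j.succ) = _
  show (if f 1 = true then (if f 2 = true then y else x) else (if f 2 = true then x else x)) = _
  show _ = (if (f 1 && f 2) = true then y else x)
  cases hf1 : f 1 <;> cases hf2 : f 2 <;> simp

end KS
section MainArg

variable {A : Type u} (σ : Signature) [Alg σ A] (θ0 θ1 θ2 : Set (A × A))

def Srel : Set (Cube (Fin 2) A) :=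
  {γ | Kc (col false γ) (col true γ) ∈ DeltaRel σ ![θ0, θ1, θ2]}

theorem srel_isHCong : IsHCongruence σ (Srel σ θ0 θ1 θ2) := by
  have hD3 := deltaRel_isHCong (σ := σ) (A := A) (![θ0, θ1, θ2])
  refine ⟨⟨?_, ?_, ?_⟩, ?_⟩
  · -- CompatCube
    intro o γk hk
    simp only [Srel, Set.mem_setOf_eq]
    have hc := hD3.1.1 o (fun k => Kc (col false (γk k)) (col true (γk k))) hk
    have heq : (fun f => Alg.interp (A := A) o fun k =>
          Kc (col false (γk k)) (col true (γk k)) f)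
        = Kc (col false (fun f => Alg.interp (A := A) o fun k => γk k f))
             (col true (fun f => Alg.interp (A := A) o fun k => γk k f)) := by
      funext f
      simp only [Kc, pat3, col]
      cases h12 : f 1 && f 2 <;> simp [h12]
    rwa [heq] at hc
  · -- SRefl
    intro i a b hab
    obtain ⟨g, hgS, heq⟩ := hab
    have ha : a = face i false g := (Prod.mk.injEq _ _ _ _ ▸ heq).1
    have hb : b = face i true g := (Prod.mk.injEq _ _ _ _ ▸ heq).2
    have hKg : Kc (col false g) (col true g) ∈ DeltaRel σ ![θ0, θ1, θ2] := hgS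
    rcases fin2cases i with rfl | rfl
    · constructor
      · refine ⟨glue 0 a a, ?_, by rw [face_glue_false, face_glue_true]⟩
        simp only [Srel, Set.mem_setOf_eq]
        rw [ha]
        apply mem_Kc_of_eq (K_refl0 hD3 false hKg)
        · intro b2; simp only [col_glue0]; cases b2 <;> rfl
        · intro b2; simp only [col_glue0]; cases b2 <;> rfl
      · refine ⟨glue 0 b b, ?_, by rw [face_glue_false, face_glue_true]⟩
        simp only [Srel, Set.mem_setOf_eq]
        rw [hb]
        apply mem_Kc_of_eq (K_refl0 hD3 true hKg)
        · intro b2; simp only [col_glue0]; cases b2 <;> rfl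
        · intro b2; simp only [col_glue0]; cases b2 <;> rfl
    · constructor
      · refine ⟨glue 1 a a, ?_, by rw [face_glue_false, face_glue_true]⟩
        simp only [Srel, Set.mem_setOf_eq]
        rw [ha]
        apply mem_Kc_of_eq (K_ss hD3 hKg)
        · intro b2; simp only [col_glue1]; rfl
        · intro b2; simp only [col_glue1]; rfl
      · refine ⟨glue 1 b b, ?_, by rw [face_glue_false, face_glue_true]⟩
        simp only [Srel, Set.mem_setOf_eq]
        rw [hb]
        apply mem_Kc_of_eq (K_tt hD3 hKg)
        · intro b2; simp only [col_glue1]; rfl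
        · intro b2; simp only [col_glue1]; rfl
  · -- SSymm
    intro i a b hab
    obtain ⟨g, hgS, heq⟩ := hab
    have ha : a = face i false g := (Prod.mk.injEq _ _ _ _ ▸ heq).1
    have hb : b = face i true g := (Prod.mk.injEq _ _ _ _ ▸ heq).2
    have hKg : Kc (col false g) (col true g) ∈ DeltaRel σ ![θ0, θ1, θ2] := hgS
    rcases fin2cases i with rfl | rfl
    · refine ⟨glue 0 b a, ?_, by rw [face_glue_false, face_glue_true]⟩
      simp only [Srel, Set.mem_setOf_eq]
      rw [ha, hb]
      apply mem_Kc_of_eq (K_sym0 hD3 hKg)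
      · intro b2; simp only [col_glue0]; cases b2 <;> rfl
      · intro b2; simp only [col_glue0]; cases b2 <;> rfl
    · refine ⟨glue 1 b a, ?_, by rw [face_glue_false, face_glue_true]⟩
      simp only [Srel, Set.mem_setOf_eq]
      rw [ha, hb]
      apply mem_Kc_of_eq (K_swap hD3 hKg)
      · intro b2; simp only [col_glue1]; rfl
      · intro b2; simp only [col_glue1]; rfl
  · -- STrans
    intro i a b c hab hbc
    obtain ⟨g, hgS, heq⟩ := hab
    obtain ⟨g', hg'S, heq'⟩ := hbc
    have ha : a = face i false g := (Prod.mk.injEq _ _ _ _ ▸ heq).1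
    have hb : b = face i true g := (Prod.mk.injEq _ _ _ _ ▸ heq).2
    have hb' : b = face i false g' := (Prod.mk.injEq _ _ _ _ ▸ heq').1
    have hc : c = face i true g' := (Prod.mk.injEq _ _ _ _ ▸ heq').2
    have hmatch : face i true g = face i false g' := by rw [← hb, hb']
    have hKg : Kc (col false g) (col true g) ∈ DeltaRel σ ![θ0, θ1, θ2] := hgS
    have hKg' : Kc (col false g') (col true g') ∈ DeltaRel σ ![θ0, θ1, θ2] := hg'S
    rcases fin2cases i with rfl | rfl
    · refine ⟨glue 0 a c, ?_, by rw [face_glue_false, face_glue_true]⟩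
      simp only [Srel, Set.mem_setOf_eq]
      rw [ha, hc]
      apply mem_Kc_of_eq
        (K_comp0 hD3 hKg hKg' (col_match0 hmatch false) (col_match0 hmatch true))
      · intro b2; simp only [col_glue0]
      · intro b2; simp only [col_glue0]
    · refine ⟨glue 1 a c, ?_, by rw [face_glue_false, face_glue_true]⟩
      simp only [Srel, Set.mem_setOf_eq]
      rw [ha, hc]
      rw [col_match1 hmatch] at hKg
      apply mem_Kc_of_eq (K_trans hD3 hKg hKg')
      · intro b2; simp only [col_glue1]; rfl
      · intro b2; simp only [col_glue1]; rfl

theorem gens_sub_srel (h1 : IsCongruence σ θ1) :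
    (⋃ i : Fin 2, cubeSet i ((![θ0, hComm σ 2 ![θ1, θ2]] : Fin 2 → Set (A × A)) i))
      ⊆ Srel σ θ0 θ1 θ2 := by
  intro x hx
  obtain ⟨i, hi⟩ := Set.mem_iUnion.mp hx
  obtain ⟨p, hp, rfl⟩ := hi
  simp only [Srel, Set.mem_setOf_eq]
  rcases fin2cases i with rfl | rfl
  · have hp0 : p ∈ θ0 := by simpa using hp
    have heq : Kc (col false (cubeAt (0:Fin 2) p)) (col true (cubeAt (0:Fin 2) p)) =
        cubeAt (0:Fin 3) p := by
      funext f
      show (if (f 1 && f 2) = true then cubeAt (0:Fin 2) p (v2 (f 0) true)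
        else cubeAt (0:Fin 2) p (v2 (f 0) false)) = cubeAt (0:Fin 3) p f
      cases h12 : f 1 && f 2 <;> simp <;> rfl
    rw [heq]
    apply gens_subset_deltaRel
    refine Set.mem_iUnion.mpr ⟨0, ⟨p, by simpa using hp0, rfl⟩⟩
  · have hpC : p ∈ hComm σ 2 ![θ1, θ2] := by simpa using hp
    have heps := hComm2_subset_eps2 σ θ1 θ2 h1 hpC
    have h3 := E_mem_delta σ θ0 θ1 θ2 heps
    rw [E_sq_K] at h3
    apply mem_Kc_of_eq h3
    · intro b; rfl
    · intro b; rfl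

theorem delta2_sub_srel (h1 : IsCongruence σ θ1) :
    DeltaRel σ ![θ0, hComm σ 2 ![θ1, θ2]] ⊆ Srel σ θ0 θ1 θ2 :=
  deltaRel_subset _ (srel_isHCong σ θ0 θ1 θ2) (gens_sub_srel σ θ0 θ1 θ2 h1)

theorem main_centrality (h1 : IsCongruence σ θ1) {δ : Set (A × A)}
    (hδc : IsCongruence σ δ)
    (hδ3 : Centrality δ (lastIdx 3) (DeltaRel σ ![θ0, θ1, θ2])) :
    Centrality δ (lastIdx 2) (DeltaRel σ ![θ0, hComm σ 2 ![θ1, θ2]]) := by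
  rintro ⟨γ, hγ, hcard⟩
  have hγS := delta2_sub_srel σ θ0 θ1 θ2 h1 hγ
  have hK : Kc (col false γ) (col true γ) ∈ DeltaRel σ ![θ0, θ1, θ2] := hγS
  have hcard' : Nat.card {f // (face (lastIdx 2) false γ f, face (lastIdx 2) true γ f) ∈ δ}
      = 1 := by
    rw [hcard]; simp [Fintype.card_fin]
  obtain ⟨b0, hb, hnb⟩ := decode2 hcard'
  rw [face_last2_const, face_last2_const] at hb hnb
  apply hδ3
  refine ⟨Kc (col false γ) (col true γ), hK, ?_⟩
  have hfaceF : ∀ f' : {x : Fin 3 // x ≠ lastIdx 3} → Bool,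
      face (lastIdx 3) false (Kc (col false γ) (col true γ)) f' =
        col false γ (f' ⟨0, by decide⟩) := by
    intro f'
    have hstep : face (lastIdx 3) false (Kc (col false γ) (col true γ)) f' =
        Kc (col false γ) (col true γ) (v3 (f' ⟨0, by decide⟩) (f' ⟨1, by decide⟩) false) :=
      face3_2 false (Kc (col false γ) (col true γ)) f'
    rw [hstep]
    have hstep2 := pat3_v3 (fun a b c => if b && c then col true γ a else col false γ a)
      (f' ⟨0, by decide⟩) (f' ⟨1, by decide⟩) false
    rw [show Kc (col false γ) (col true γ)
        (v3 (f' ⟨0, by decide⟩) (f' ⟨1, by decide⟩) false) =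
      (if (f' ⟨1, by decide⟩ && false) = true then col true γ (f' ⟨0, by decide⟩)
        else col false γ (f' ⟨0, by decide⟩)) from hstep2]
    simp
  have hfaceT : ∀ f' : {x : Fin 3 // x ≠ lastIdx 3} → Bool,
      face (lastIdx 3) true (Kc (col false γ) (col true γ)) f' =
        (if f' ⟨1, by decide⟩ = true then col true γ (f' ⟨0, by decide⟩)
          else col false γ (f' ⟨0, by decide⟩)) := by
    intro f'
    have hstep : face (lastIdx 3) true (Kc (col false γ) (col true γ)) f' =
        Kc (col false γ) (col true γ) (v3 (f' ⟨0, by decide⟩) (f' ⟨1, by decide⟩) true) :=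
      face3_2 true (Kc (col false γ) (col true γ)) f'
    rw [hstep]
    have hstep2 := pat3_v3 (fun a b c => if b && c then col true γ a else col false γ a)
      (f' ⟨0, by decide⟩) (f' ⟨1, by decide⟩) true
    rw [show Kc (col false γ) (col true γ)
        (v3 (f' ⟨0, by decide⟩) (f' ⟨1, by decide⟩) true) =
      (if (f' ⟨1, by decide⟩ && true) = true then col true γ (f' ⟨0, by decide⟩)
        else col false γ (f' ⟨0, by decide⟩)) from hstep2]
    rw [Bool.and_true]
  apply encode3 (g := fun j => if j = ⟨0, by decide⟩ then !b0 else true)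
  intro f
  rw [hfaceF f, hfaceT f]
  have e0 : (fun j : {x : Fin 3 // x ≠ lastIdx 3} =>
      if j = ⟨0, by decide⟩ then !b0 else true) ⟨0, by decide⟩ = !b0 := if_pos rfl
  have e1 : (fun j : {x : Fin 3 // x ≠ lastIdx 3} =>
      if j = ⟨0, by decide⟩ then !b0 else true) ⟨1, by decide⟩ = true :=
    if_neg (fun hcon => absurd (congrArg Subtype.val hcon) (by decide))
  constructor
  · intro hP hfe
    rw [hfe] at hP
    rw [e0, e1, if_pos rfl] at hP
    exact hnb hP
  · intro hne'
    by_cases hf1 : f ⟨1, by decide⟩ = true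
    · rw [if_pos hf1]
      by_cases hab : f ⟨0, by decide⟩ = b0
      · rw [hab]
        exact hb
      · exfalso
        apply hne'
        apply ext_I3
        · rw [if_pos rfl]
          cases b0 <;> cases h0 : f ⟨0, by decide⟩ <;> simp_all
        · rw [if_neg (fun hcon => absurd (congrArg Subtype.val hcon) (by decide))]
          exact hf1
    · rw [if_neg hf1]
      exact hδc.1 _

end MainArg

/-- the binary–ternary nesting inequality for the hypercommutator:
`[θ_0, [θ_1,θ_2]_H]_H ≤ [θ_0,θ_1,θ_2]_H`. -/
theorem stmt16 {A : Type u} (σ : Signature) [Alg σ A]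
    (θ0 θ1 θ2 : Set (A × A)) (h0 : IsCongruence σ θ0)
    (h1 : IsCongruence σ θ1) (h2 : IsCongruence σ θ2) :
    hComm σ 2 ![θ0, hComm σ 2 ![θ1, θ2]] ⊆ hComm σ 3 ![θ0, θ1, θ2] := by
  intro p hp
  apply Set.mem_sInter.mpr
  rintro δ ⟨hδc, hδ3⟩
  exact Set.mem_sInter.mp hp δ ⟨hδc, main_centrality σ θ0 θ1 θ2 h1 hδc hδ3⟩
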